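/- arXiv:1510.05717 — 3 statements merged into one kernel-verified Lean document; each statement's English description precedes it below -/
import Mathlib

section
/- Let G be a connected signed graph with |E_N(G)| = ε_N(G). Then the unsigned graph G − E_N(G) obtained by deleting all negative edges is connected; consequently |E(G)| ≥ ε_N(G) + |V(G)| − 1. -/
open scoped Classical

noncomputable section

/-- A signed (multi)graph: a finite multigraph (loops and multiple edges allowed)
together with a sign on each edge (`neg e = true` means `e` is negative). -/
structure SignedMultigraph where
  V : Type
  E : Type
  [fintypeV : Fintype V]
  [fintypeE : Fintype E]
  ends : E → Sym2 V
  neg : E → Bool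

attribute [instance] SignedMultigraph.fintypeV SignedMultigraph.fintypeE

namespace SignedMultigraph

variable (G : SignedMultigraph)

/-- The vertices incident with at least one edge of `S`. -/
def support (S : Finset G.E) : Finset G.V :=
  Finset.univ.filter fun v => ∃ e ∈ S, v ∈ G.ends e

/-- Degree of `v` in the edge set `S`; loops count twice. -/
def degIn (S : Finset G.E) (v : G.V) : ℕ :=
  ∑ e ∈ S, (if G.ends e = Sym2.diag v then 2 else if v ∈ G.ends e then 1 else 0)

/-- `u` and `v` are joined by an edge of `S`. -/
def Adj (S : Finset G.E) (u v : G.V) : Prop := ∃ e ∈ S, G.ends e = s(u, v)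

/-- Reachability using only edges of `S`. -/
def Reach (S : Finset G.E) : G.V → G.V → Prop := Relation.ReflTransGen (G.Adj S)

/-- The subgraph with edge set `S` (and vertex set its support) is connected. -/
def ConnOn (S : Finset G.E) : Prop :=
  ∀ u ∈ G.support S, ∀ v ∈ G.support S, G.Reach S u v

/-- The whole signed graph is connected. -/
def Connected : Prop := Nonempty G.V ∧ ∀ u v : G.V, G.Reach Finset.univ u v

/-- The negative edges among `S`. -/
def negEdges (S : Finset G.E) : Finset G.E := S.filter fun e => G.neg e = true

/-- A circuit: a (nonempty) connected 2-regular subgraph, given by its edge set. -/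
def IsCircuit (S : Finset G.E) : Prop :=
  S.Nonempty ∧ G.ConnOn S ∧ ∀ v ∈ G.support S, G.degIn S v = 2

/-- A balanced circuit: a circuit with an even number of negative edges. -/
def IsBalancedCircuit (S : Finset G.E) : Prop :=
  G.IsCircuit S ∧ Even (G.negEdges S).card

/-- An unbalanced circuit: a circuit with an odd number of negative edges. -/
def IsUnbalancedCircuit (S : Finset G.E) : Prop :=
  G.IsCircuit S ∧ ¬ Even (G.negEdges S).card

/-- A short barbell: two unbalanced circuits meeting at exactly one vertex. -/
def IsShortBarbell (S : Finset G.E) : Prop :=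
  ∃ C₁ C₂ : Finset G.E, G.IsUnbalancedCircuit C₁ ∧ G.IsUnbalancedCircuit C₂ ∧
    Disjoint C₁ C₂ ∧ (G.support C₁ ∩ G.support C₂).card = 1 ∧ S = C₁ ∪ C₂

/-- A path with (distinct) ends `u` and `v`, given by its edge set. -/
def IsPath (P : Finset G.E) (u v : G.V) : Prop :=
  P.Nonempty ∧ G.ConnOn P ∧ u ≠ v ∧ u ∈ G.support P ∧ v ∈ G.support P ∧
    G.degIn P u = 1 ∧ G.degIn P v = 1 ∧
    ∀ w ∈ G.support P, w ≠ u → w ≠ v → G.degIn P w = 2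

/-- A long barbell: two vertex-disjoint unbalanced circuits joined by a path
meeting the circuits only at its ends. -/
def IsLongBarbell (S : Finset G.E) : Prop :=
  ∃ (C₁ C₂ P : Finset G.E) (u v : G.V),
    G.IsUnbalancedCircuit C₁ ∧ G.IsUnbalancedCircuit C₂ ∧
    Disjoint (G.support C₁) (G.support C₂) ∧
    G.IsPath P u v ∧
    G.support P ∩ G.support C₁ = {u} ∧ G.support P ∩ G.support C₂ = {v} ∧
    Disjoint P C₁ ∧ Disjoint P C₂ ∧
    S = C₁ ∪ C₂ ∪ P

/-- A signed circuit: a balanced circuit, a short barbell, or a long barbell. -/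
def IsSignedCircuit (S : Finset G.E) : Prop :=
  G.IsBalancedCircuit S ∨ G.IsShortBarbell S ∨ G.IsLongBarbell S

/-- The number of members of the family `F` containing the edge `e`. -/
def coverCount (F : Multiset (Finset G.E)) (e : G.E) : ℕ :=
  (F.filter fun S => e ∈ S).card

/-- The total length of the family `F`. -/
def coverLength (F : Multiset (Finset G.E)) : ℕ := (F.map Finset.card).sum

/-- A signed circuit cover: every edge is in at least one member. -/
def IsSignedCircuitCover (F : Multiset (Finset G.E)) : Prop :=
  (∀ S ∈ F, G.IsSignedCircuit S) ∧ ∀ e : G.E, 1 ≤ G.coverCount F e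

/-- The length of a shortest signed circuit cover. -/
def SCC : ℕ := sInf { n | ∃ F, G.IsSignedCircuitCover F ∧ G.coverLength F = n }

/-- Whether edge `e` has exactly one endpoint in the vertex set `A`. -/
def crossesB (A : Finset G.V) (e : G.E) : Bool :=
  Sym2.lift ⟨fun x y => Bool.xor (decide (x ∈ A)) (decide (y ∈ A)),
    fun x y => Bool.xor_comm _ _⟩ (G.ends e)

/-- Sign of `e` (`true` = negative) after switching at every vertex of `A`. -/
def negAfter (A : Finset G.V) (e : G.E) : Bool :=
  Bool.xor (G.neg e) (G.crossesB A e)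

/-- Minimum number of negative edges in `S` over all switchings. -/
def negOf (S : Finset G.E) : ℕ :=
  sInf { n | ∃ A : Finset G.V, (S.filter fun e => G.negAfter A e = true).card = n }

/-- The negativeness of `G`. -/
def negativeness : ℕ := G.negOf Finset.univ

/-- The edges of `S` with exactly one endpoint in `U`: the edge boundary `δ(U)` inside `S`. -/
def boundary (S : Finset G.E) (U : Finset G.V) : Finset G.E :=
  S.filter fun e => G.crossesB U e = true

/-- `b` is a bridge of the subgraph with edge set `S`. -/
def IsBridge (S : Finset G.E) (b : G.E) : Prop :=
  ∃ U : Finset G.V, G.boundary S U = {b}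

/-- The subgraph with edge set `S` is bridgeless. -/
def Bridgeless (S : Finset G.E) : Prop := ∀ b ∈ S, ¬ G.IsBridge S b

/-- `G` is 2-edge-connected. -/
def TwoEdgeConnected : Prop :=
  G.Connected ∧ ∀ b : G.E, ¬ G.IsBridge Finset.univ b

/-- Edges of `S` lying in the same component (of the subgraph with edge set `S`)
as the vertex `x`. -/
def compEdges (S : Finset G.E) (x : G.V) : Finset G.E :=
  S.filter fun e => ∃ u, u ∈ G.ends e ∧ G.Reach S x u

/-- A g-bridge: a bridge such that both components of `G - b` have even negativeness. -/
def IsGBridge (b : G.E) : Prop :=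
  G.IsBridge Finset.univ b ∧
    ∃ x y : G.V, G.ends b = s(x, y) ∧
      Even (G.negOf (G.compEdges (Finset.univ.erase b) x)) ∧
      Even (G.negOf (G.compEdges (Finset.univ.erase b) y))

/-- `G` has no g-bridge (in any of its components). -/
def GBridgeless : Prop := ∀ b : G.E, ¬ G.IsGBridge b

/-- Member of `B_g(G)`: a bridge such that at least one component of `G - b`
contains an odd number of negative edges. -/
def IsBgBridge (b : G.E) : Prop :=
  G.IsBridge Finset.univ b ∧
    ∃ x : G.V, x ∈ G.ends b ∧
      ¬ Even (G.negEdges (G.compEdges (Finset.univ.erase b) x)).card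

/-- Member of `B_s(G)`: a bridge such that each of the two components of `G - b`
contains a negative edge. -/
def IsSBridge (b : G.E) : Prop :=
  G.IsBridge Finset.univ b ∧
    ∃ x y : G.V, G.ends b = s(x, y) ∧
      (G.negEdges (G.compEdges (Finset.univ.erase b) x)).Nonempty ∧
      (G.negEdges (G.compEdges (Finset.univ.erase b) y)).Nonempty

/-- `G` is s-bridgeless: every edge lies in some signed circuit. -/
def SBridgeless : Prop := ∀ e : G.E, ∃ S : Finset G.E, G.IsSignedCircuit S ∧ e ∈ S

/-- `{e, f}` is a 2-edge-cut of `G`. -/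
def IsTwoEdgeCut (e f : G.E) : Prop :=
  e ≠ f ∧ ∃ U : Finset G.V, G.boundary Finset.univ U = {e, f}

/-- `S_G(e) = {e} ∪ {f : {e,f} is a 2-edge-cut of G}`. -/
def SSet (e : G.E) : Finset G.E :=
  insert e (Finset.univ.filter fun f => G.IsTwoEdgeCut e f)

/-- The edge set `R` spans an acyclic subgraph (every nonempty subset has a
vertex of degree one). -/
def AcyclicSet (R : Finset G.E) : Prop :=
  ∀ F ⊆ R, F.Nonempty → ∃ v : G.V, G.degIn F v = 1

/-- `T` is the edge set of a spanning tree of `G`. -/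
def IsSpanningTree (T : Finset G.E) : Prop :=
  G.AcyclicSet T ∧ Nonempty G.V ∧ ∀ u v : G.V, G.Reach T u v

/-- `G` is eulerian: connected with all degrees even. -/
def Eulerian : Prop :=
  G.Connected ∧ ∀ v : G.V, Even (G.degIn Finset.univ v)

/-- The edge set `S` spans an eulerian subgraph. -/
def IsEulerianSub (S : Finset G.E) : Prop :=
  S.Nonempty ∧ G.ConnOn S ∧ ∀ v ∈ G.support S, Even (G.degIn S v)

/-- The vertex class of `v` after contracting each member of `ℬ`. -/
def classOf (ℬ : Finset (Finset G.E)) (v : G.V) : Finset G.V :=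
  Finset.univ.filter fun u => u = v ∨ ∃ B ∈ ℬ, v ∈ G.support B ∧ u ∈ G.support B

/-- Degree, in edge set `F`, of the contracted class of `v`. -/
def classDeg (ℬ : Finset (Finset G.E)) (F : Finset G.E) (v : G.V) : ℕ :=
  ∑ u ∈ G.classOf ℬ v, G.degIn F u

/-- `ℬ` witnesses that the subgraph with edge set `S` is a generalized barbell:
`ℬ` is a family of vertex-disjoint eulerian subgraphs of `S`, the contraction
`S/(∪ℬ)` is acyclic, and for every vertex `x` of the contracted graph,
`|E_N(B_x)| ≡ |δ(V(B_x))| (mod 2)`. -/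
def GenBarbellWitness (S : Finset G.E) (ℬ : Finset (Finset G.E)) : Prop :=
  (∀ B ∈ ℬ, B ⊆ S ∧ G.IsEulerianSub B) ∧
  (∀ B₁ ∈ ℬ, ∀ B₂ ∈ ℬ, B₁ ≠ B₂ → Disjoint (G.support B₁) (G.support B₂)) ∧
  (∀ F ⊆ S \ ℬ.sup id, F.Nonempty → ∃ v : G.V, G.classDeg ℬ F v = 1) ∧
  (∀ B ∈ ℬ, (G.negEdges B).card ≡ (G.boundary S (G.support B)).card [MOD 2]) ∧
  (∀ v ∈ G.support S, (∀ B ∈ ℬ, v ∉ G.support B) → Even (G.boundary S {v}).card)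

/-- The subgraph with edge set `S` is a generalized barbell. -/
def IsGenBarbell (S : Finset G.E) : Prop := ∃ ℬ, G.GenBarbellWitness S ℬ

end SignedMultigraph

/-! If the positive edges left `G` disconnected, some component `U` of `G − E_N(G)` would be a
proper nonempty set of vertices whose edge cut consists of negative edges only, and switching
at `U` would make all of them positive, contradicting `|E_N(G)| = ε_N(G)`. The edge count is
then the usual bound for a connected graph on its positive edges. -/

namespace SignedMultigraph

variable {G : SignedMultigraph}

lemma Adj.symm {S : Finset G.E} {u v : G.V} (h : G.Adj S u v) : G.Adj S v u := by
  obtain ⟨e, he, hends⟩ := h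
  exact ⟨e, he, by rw [hends, Sym2.eq_swap]⟩

lemma crossesB_eq_true_iff {A : Finset G.V} {e : G.E} {x y : G.V} (h : G.ends e = s(x, y)) :
    G.crossesB A e = true ↔ (x ∈ A ↔ y ∉ A) := by
  rw [crossesB, h, Sym2.lift_mk]
  by_cases hx : x ∈ A <;> by_cases hy : y ∈ A <;> simp [hx, hy]

lemma boundary_eq_empty_of_adj_closed {S : Finset G.E} {U : Finset G.V}
    (hU : ∀ x y, G.Adj S x y → x ∈ U → y ∈ U) : G.boundary S U = ∅ := by
  refine Finset.filter_false_of_mem fun e he hcross => ?_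
  obtain ⟨⟨x, y⟩, hxy⟩ := Quot.exists_rep (G.ends e)
  have hadj : G.Adj S x y := ⟨e, he, hxy.symm⟩
  rw [crossesB_eq_true_iff hxy.symm] at hcross
  by_cases hx : x ∈ U
  · exact hcross.mp hx (hU x y hadj hx)
  · exact hx (hcross.mpr fun hy => hx (hU y x hadj.symm hy))

lemma boundary_nonempty_of_reach {S : Finset G.E} {U : Finset G.V} {u v : G.V}
    (h : G.Reach S u v) (hu : u ∈ U) (hv : v ∉ U) : (G.boundary S U).Nonempty := by
  induction h with
  | refl => exact absurd hu hv
  | @tail w v _ hadj ih =>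
    by_cases hw : w ∈ U
    · obtain ⟨e, he, hends⟩ := hadj
      exact ⟨e, Finset.mem_filter.mpr
        ⟨he, (crossesB_eq_true_iff hends).mpr ⟨fun _ => hv, fun _ => hw⟩⟩⟩
    · exact ih hw

/-- Switching at `U` flips the signs of exactly the edges of `δ(U)`. -/
lemma negOf_lt_card_negEdges {S : Finset G.E} {U : Finset G.V}
    (hneg : G.boundary S U ⊆ G.negEdges S) (hne : (G.boundary S U).Nonempty) :
    G.negOf S < (G.negEdges S).card := by
  have hswitch : S.filter (fun e => G.negAfter U e = true) = G.negEdges S \ G.boundary S U := by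
    ext e
    have hmem := @hneg e
    simp only [boundary, negEdges, Finset.mem_filter, Finset.mem_sdiff, negAfter] at hmem ⊢
    cases hc : G.crossesB U e <;> cases hn : G.neg e <;> simp_all
  calc G.negOf S ≤ (G.negEdges S \ G.boundary S U).card := Nat.sInf_le ⟨U, by rw [hswitch]⟩
    _ < (G.negEdges S).card := Finset.card_lt_card (Finset.sdiff_ssubset hneg hne)

theorem reach_sdiff_negEdges (hconn : ∀ u v : G.V, G.Reach Finset.univ u v)
    (hmin : (G.negEdges Finset.univ).card = G.negativeness) (u v : G.V) :
    G.Reach (Finset.univ \ G.negEdges Finset.univ) u v := by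
  by_contra huv
  set S := Finset.univ \ G.negEdges Finset.univ
  let U : Finset G.V := Finset.univ.filter (G.Reach S u)
  have hU : ∀ x y, G.Adj S x y → x ∈ U → y ∈ U := fun x y hxy hx => by
    simp only [U, Finset.mem_filter, Finset.mem_univ, true_and] at hx ⊢
    exact hx.tail hxy
  have hcut : G.boundary Finset.univ U ⊆ G.negEdges Finset.univ := fun e he => by
    by_contra heN
    have heS : e ∈ G.boundary S U :=
      Finset.mem_filter.mpr ⟨Finset.mem_sdiff.mpr ⟨Finset.mem_univ e, heN⟩,
        (Finset.mem_filter.mp he).2⟩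
    simp [boundary_eq_empty_of_adj_closed hU] at heS
  have hne : (G.boundary Finset.univ U).Nonempty :=
    boundary_nonempty_of_reach (hconn u v) (Finset.mem_filter.mpr ⟨Finset.mem_univ u, .refl⟩)
      (by simpa [U] using huv)
  exact (negOf_lt_card_negEdges hcut hne).ne' hmin

def toSimpleGraph (S : Finset G.E) : SimpleGraph G.V :=
  SimpleGraph.fromEdgeSet (G.ends '' S)

lemma Reach.reachable_toSimpleGraph {S : Finset G.E} {u v : G.V} (h : G.Reach S u v) :
    (G.toSimpleGraph S).Reachable u v := by
  induction h with
  | refl => rfl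
  | @tail w v _ hadj ih =>
    obtain ⟨e, he, hends⟩ := hadj
    by_cases hwv : w = v
    · exact hwv ▸ ih
    · exact ih.trans (SimpleGraph.Adj.reachable ⟨⟨e, he, hends⟩, hwv⟩)

lemma card_edgeSet_toSimpleGraph_le (S : Finset G.E) :
    Nat.card (G.toSimpleGraph S).edgeSet ≤ S.card := by
  rw [Nat.card_coe_set_eq, ← Set.ncard_coe_finset S]
  calc (G.toSimpleGraph S).edgeSet.ncard ≤ (G.ends '' S).ncard :=
        Set.ncard_le_ncard (by simp [toSimpleGraph])
    _ ≤ (S : Set G.E).ncard := Set.ncard_image_le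

theorem card_V_le_card_add_one_of_reach {S : Finset G.E} (hS : ∀ u v : G.V, G.Reach S u v) :
    Fintype.card G.V ≤ S.card + 1 := by
  cases isEmpty_or_nonempty G.V
  · simp
  have hconn : (G.toSimpleGraph S).Connected :=
    ⟨fun u v => (hS u v).reachable_toSimpleGraph⟩
  have := hconn.card_vert_le_card_edgeSet_add_one
  rw [Nat.card_eq_fintype_card] at this
  linarith [card_edgeSet_toSimpleGraph_le (G := G) S]

end SignedMultigraph

/-- Let `G` be a connected signed graph with `|E_N(G)| = ε_N(G)`.
Then `G − E_N(G)` is connected; consequently `|E(G)| ≥ ε_N(G) + |V(G)| − 1`. -/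
theorem deleting_negEdges_connected (G : SignedMultigraph) (hconn : G.Connected)
    (hmin : (G.negEdges Finset.univ).card = G.negativeness) :
    (Nonempty G.V ∧
      ∀ u v : G.V, G.Reach (Finset.univ \ G.negEdges Finset.univ) u v) ∧
    G.negativeness + Fintype.card G.V ≤ Fintype.card G.E + 1 := by
  obtain ⟨hne, hreach⟩ := hconn
  have hpos := G.reach_sdiff_negEdges hreach hmin
  refine ⟨⟨hne, hpos⟩, ?_⟩
  have hcard : (Finset.univ \ G.negEdges Finset.univ).card + (G.negEdges Finset.univ).card =
      Fintype.card G.E := Finset.card_sdiff_add_card_eq_card (Finset.subset_univ _)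
  have := SignedMultigraph.card_V_le_card_add_one_of_reach hpos
  omega
end
end

section
/- Let H be a signed graph such that |E_N(H)| ≥ 2 and H − E_N(H) is a spanning tree of H. If |E_N(H)| is even, then H has a subgraph which is a generalized barbell and which contains all edges of B_g(H) ∪ (∪_{e ∈ E_N(H)} S_H(e)). -/
open scoped Classical

noncomputable section

/-!
Let `N` be the set of negative edges and `T` the spanning tree `E(G) - N`. Adding to `N` a
`T`-join `D` of the vertices of odd `N`-degree gives an even subgraph `R = N ∪ D`. Its components
are the eulerian subgraphs of the barbell, and a 2-edge-cut `{e, f}` with `e ∈ N` meets `R` in an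
even number of edges, so `f ∈ R`. As `|N|` is even, after contracting the components there is a
join `C` giving every contracted vertex the parity of its negative edges, and removing even
subgraphs from `C` makes it acyclic. The parity condition of `S = R ∪ C` then holds on every union
of contracted vertices, in particular on the side of a bridge in `B_g` with an odd number of
negative edges, which forces the bridge into `S`.
-/

namespace SignedMultigraph

variable {G : SignedMultigraph}

section Degrees

lemma exists_ends_eq (e : G.E) : ∃ a b : G.V, G.ends e = s(a, b) :=
  ⟨(G.ends e).out.1, (G.ends e).out.2, by rw [Sym2.mk, Prod.mk.eta, Quot.out_eq]⟩

lemma degIn_eq_sum_degIn_singleton (S : Finset G.E) (v : G.V) :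
    G.degIn S v = ∑ e ∈ S, G.degIn {e} v := by
  simp [degIn]

lemma sum_degIn_singleton {e : G.E} {a b : G.V} (h : G.ends e = s(a, b)) (U : Finset G.V) :
    ∑ v ∈ U, G.degIn {e} v = (if a ∈ U then 1 else 0) + (if b ∈ U then 1 else 0) := by
  have key : ∀ v, (if (a = v ∧ b = v ∨ a = v ∧ b = v) then 2 else
      if v = a ∨ v = b then 1 else 0) = (if v = a then 1 else 0) + (if v = b then 1 else 0) := by
    intro v
    by_cases hva : v = a <;> by_cases hvb : v = b <;> simp_all [eq_comm]
  simp only [degIn, Finset.sum_singleton, h, Sym2.diag, Sym2.eq_iff, Sym2.mem_iff, key,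
    Finset.sum_add_distrib, Finset.sum_ite_eq']

lemma sum_degIn (F : Finset G.E) (U : Finset G.V) :
    ∑ v ∈ U, G.degIn F v = ∑ e ∈ F, ∑ v ∈ U, G.degIn {e} v := by
  simp_rw [degIn_eq_sum_degIn_singleton F]
  exact Finset.sum_comm

lemma sum_degIn_univ (F : Finset G.E) : ∑ v, G.degIn F v = 2 * F.card := by
  rw [sum_degIn, Finset.card_eq_sum_ones, Finset.mul_sum]
  refine Finset.sum_congr rfl fun e _ => ?_
  obtain ⟨a, b, h⟩ := exists_ends_eq e
  simp [sum_degIn_singleton h]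

lemma card_boundary_cast (F : Finset G.E) (U : Finset G.V) :
    ((G.boundary F U).card : ZMod 2) = ∑ v ∈ U, (G.degIn F v : ZMod 2) := by
  rw [← Nat.cast_sum, sum_degIn, boundary, Finset.card_filter, Nat.cast_sum, Nat.cast_sum]
  refine Finset.sum_congr rfl fun e _ => ?_
  obtain ⟨a, b, h⟩ := exists_ends_eq e
  rw [sum_degIn_singleton h, crossesB, h, Sym2.lift_mk]
  by_cases ha : a ∈ U <;> by_cases hb : b ∈ U <;> simp [ha, hb, CharTwo.two_eq_zero]

lemma degIn_mono {A B : Finset G.E} (h : A ⊆ B) (v : G.V) : G.degIn A v ≤ G.degIn B v :=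
  Finset.sum_le_sum_of_subset h

lemma degIn_union {A B : Finset G.E} (h : Disjoint A B) (v : G.V) :
    G.degIn (A ∪ B) v = G.degIn A v + G.degIn B v :=
  Finset.sum_union h

lemma degIn_sdiff_add {A B : Finset G.E} (h : B ⊆ A) (v : G.V) :
    G.degIn (A \ B) v + G.degIn B v = G.degIn A v :=
  Finset.sum_sdiff h

lemma degIn_symmDiff_cast (A B : Finset G.E) (v : G.V) :
    (G.degIn (symmDiff A B) v : ZMod 2) = G.degIn A v + G.degIn B v := by
  have h : G.degIn (symmDiff A B) v + 2 * G.degIn (A ∩ B) v = G.degIn A v + G.degIn B v := by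
    rw [symmDiff_eq_sup_sdiff_inf, Finset.sup_eq_union, Finset.inf_eq_inter, two_mul, ← add_assoc,
      degIn_sdiff_add Finset.inter_subset_union]
    exact Finset.sum_union_inter
  rw [← Nat.cast_add, ← h, Nat.cast_add, Nat.cast_mul, Nat.cast_ofNat,
    CharTwo.two_eq_zero (R := ZMod 2), zero_mul, add_zero]

lemma degIn_ne_zero {F : Finset G.E} {e : G.E} {v : G.V} (he : e ∈ F) (hv : v ∈ G.ends e) :
    G.degIn F v ≠ 0 := by
  refine Nat.pos_iff_ne_zero.mp
    (lt_of_lt_of_le ?_ (Finset.single_le_sum (fun _ _ => Nat.zero_le _) he))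
  split_ifs <;> simp_all

lemma exists_mem_ends_of_degIn_ne_zero {F : Finset G.E} {v : G.V} (h : G.degIn F v ≠ 0) :
    ∃ e ∈ F, v ∈ G.ends e := by
  obtain ⟨e, he, hne⟩ := Finset.exists_ne_zero_of_sum_ne_zero h
  refine ⟨e, he, ?_⟩
  split_ifs at hne with hd hv
  · simp [hd, Sym2.diag]
  · exact hv
  · exact absurd rfl hne

lemma degIn_singleton_cast {e : G.E} {a b : G.V} (h : G.ends e = s(a, b)) (v : G.V) :
    (G.degIn {e} v : ZMod 2) = (Pi.single a 1 + Pi.single b 1 : G.V → ZMod 2) v := by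
  have := sum_degIn_singleton h {v}
  rw [Finset.sum_singleton] at this
  rw [this]
  simp [Pi.single_apply, eq_comm]

lemma crossesB_eq {e : G.E} {a b : G.V} (h : G.ends e = s(a, b)) (U : Finset G.V) :
    G.crossesB U e = (decide (a ∈ U) ^^ decide (b ∈ U)) := by
  rw [crossesB, h, Sym2.lift_mk]

end Degrees

section Reachability

lemma reach_symm {S : Finset G.E} {u v : G.V} (h : G.Reach S u v) : G.Reach S v u := by
  induction h with
  | refl => exact .refl
  | tail _ hadj ih =>
    obtain ⟨e, he, hends⟩ := hadj
    exact .head ⟨e, he, hends.trans Sym2.eq_swap⟩ ih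

lemma reach_mono {S S' : Finset G.E} (hS : S ⊆ S') {u v : G.V} (h : G.Reach S u v) :
    G.Reach S' u v :=
  Relation.ReflTransGen.mono (fun _ _ ⟨e, he, hends⟩ => ⟨e, hS he, hends⟩) _ _ h

lemma Reach.exists_subset_degIn_cast {S : Finset G.E} {a b : G.V} (h : G.Reach S a b) :
    ∃ P ⊆ S, ∀ v,
      (G.degIn P v : ZMod 2) = (Pi.single a 1 + Pi.single b 1 : G.V → ZMod 2) v := by
  induction h with
  | refl =>
    exact ⟨∅, Finset.empty_subset _, fun v => by simp [degIn, CharTwo.add_self_eq_zero]⟩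
  | @tail c d _ hadj ih =>
    obtain ⟨P, hPS, hP⟩ := ih
    obtain ⟨e, heS, hends⟩ := hadj
    refine ⟨symmDiff P {e}, symmDiff_le_sup.trans (sup_le hPS (by simpa using heS)),
      fun v => ?_⟩
    rw [degIn_symmDiff_cast, hP, degIn_singleton_cast hends]
    simp only [Pi.add_apply]
    linear_combination CharTwo.add_self_eq_zero ((Pi.single c 1 : G.V → ZMod 2) v)

lemma exists_subset_degIn_cast_eq {T : Finset G.E} (hT : ∀ u v, G.Reach T u v)
    (τ : G.V → ZMod 2) (hτ : ∑ v, τ v = 0) :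
    ∃ J ⊆ T, ∀ v, (G.degIn J v : ZMod 2) = τ v := by
  rcases isEmpty_or_nonempty G.V with hV | ⟨⟨r⟩⟩
  · exact ⟨∅, Finset.empty_subset _, fun v => isEmptyElim v⟩
  -- join every vertex `x` with `τ x = 1` to the fixed vertex `r`
  have key : ∀ X : Finset G.V, ∃ J ⊆ T, ∀ v, (G.degIn J v : ZMod 2) =
      ∑ x ∈ X, τ x * (Pi.single x 1 + Pi.single r 1 : G.V → ZMod 2) v := by
    intro X
    induction X using Finset.induction_on with
    | empty => exact ⟨∅, Finset.empty_subset _, fun v => by simp [degIn]⟩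
    | insert x X hx ih =>
      obtain ⟨J, hJT, hJ⟩ := ih
      obtain ⟨P, hPT, hP⟩ := (hT x r).exists_subset_degIn_cast
      rcases (by decide : ∀ c : ZMod 2, c = 0 ∨ c = 1) (τ x) with h0 | h1
      · exact ⟨J, hJT, fun v => by rw [Finset.sum_insert hx, h0, zero_mul, zero_add, hJ]⟩
      · refine ⟨symmDiff J P, symmDiff_le_sup.trans (sup_le hJT hPT), fun v => ?_⟩
        rw [degIn_symmDiff_cast, hJ, hP, Finset.sum_insert hx, h1, one_mul, add_comm]
  obtain ⟨J, hJT, hJ⟩ := key Finset.univ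
  refine ⟨J, hJT, fun v => ?_⟩
  simp [hJ, mul_add, Finset.sum_add_distrib, hτ, Pi.single_apply]

lemma Reach.mem_iff_of_forall_not_crossesB {S : Finset G.E} {U : Finset G.V} {x v : G.V}
    (h : G.Reach S x v) (hS : ∀ e ∈ S, G.crossesB U e = false) : x ∈ U ↔ v ∈ U := by
  induction h with
  | refl => rfl
  | @tail c d _ hadj ih =>
    obtain ⟨e, heS, hends⟩ := hadj
    have := hS e heS
    rw [crossesB_eq hends] at this
    rw [ih]
    by_cases hc : c ∈ U <;> by_cases hd : d ∈ U <;> simp_all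

lemma Reach.erase_or {S : Finset G.E} {b : G.E} {x y v : G.V} (h : G.Reach S x v)
    (hb : G.ends b = s(x, y)) : G.Reach (S.erase b) x v ∨ G.Reach (S.erase b) y v := by
  induction h with
  | refl => exact Or.inl Relation.ReflTransGen.refl
  | @tail c d _ hadj ih =>
    obtain ⟨e, heS, hends⟩ := hadj
    by_cases heb : e = b
    · subst heb
      rcases Sym2.eq_iff.mp (hends.symm.trans hb) with ⟨-, rfl⟩ | ⟨-, rfl⟩
      · exact Or.inr Relation.ReflTransGen.refl
      · exact Or.inl Relation.ReflTransGen.refl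
    · have hadj' : G.Adj (S.erase b) c d := ⟨e, Finset.mem_erase.mpr ⟨heb, heS⟩, hends⟩
      exact ih.imp (·.tail hadj') (·.tail hadj')

end Reachability

section Cycles

lemma card_filter_degIn_ne_zero_le {F : Finset G.E} (h : ∀ v, G.degIn F v ≠ 1) :
    (Finset.univ.filter fun v => G.degIn F v ≠ 0).card ≤ F.card := by
  set X := Finset.univ.filter fun v => G.degIn F v ≠ 0
  have hsum : ∑ v ∈ X, G.degIn F v = 2 * F.card := by
    rw [← sum_degIn_univ]
    exact Finset.sum_subset (Finset.subset_univ _) fun v _ hv => by simpa [X] using hv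
  have hle : ∑ _v ∈ X, 2 ≤ ∑ v ∈ X, G.degIn F v :=
    Finset.sum_le_sum fun v hv => by
      have := h v
      have := (Finset.mem_filter.mp hv).2
      omega
  rw [hsum, Finset.sum_const, smul_eq_mul] at hle
  omega

/-- The `2 ^ |F|` subsets of `F` cannot have pairwise different degree parities on the at most
`|F| - 1` touched vertices other than a fixed one; the parity there is forced by the handshake
lemma. -/
lemma exists_even_subset_of_degIn_ne_one {F : Finset G.E} (hF : F.Nonempty)
    (h : ∀ v, G.degIn F v ≠ 1) : ∃ D ⊆ F, D.Nonempty ∧ ∀ v, Even (G.degIn D v) := by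
  set X := Finset.univ.filter fun v => G.degIn F v ≠ 0
  obtain ⟨e, he⟩ := hF
  obtain ⟨a, b, hab⟩ := exists_ends_eq e
  have haX : a ∈ X := by simp [X, degIn_ne_zero he (hab ▸ Sym2.mem_mk_left a b)]
  have hXF : X.card ≤ F.card := card_filter_degIn_ne_zero_le h
  have hcard : Fintype.card (X.erase a → ZMod 2) < Fintype.card F.powerset := by
    rw [Fintype.card_fun, Fintype.card_coe, Fintype.card_coe, Finset.card_powerset, ZMod.card,
      Finset.card_erase_of_mem haX]
    have := Finset.card_pos.mpr ⟨a, haX⟩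
    exact Nat.pow_lt_pow_right (by norm_num) (by omega)
  obtain ⟨C₁, C₂, hne, heq⟩ := Fintype.exists_ne_map_eq_of_card_lt
    (fun (C : F.powerset) (v : X.erase a) => (G.degIn C v : ZMod 2)) hcard
  have hC₁ := Finset.mem_powerset.mp C₁.2
  have hC₂ := Finset.mem_powerset.mp C₂.2
  set D := symmDiff (C₁ : Finset G.E) C₂
  have hDF : D ⊆ F := symmDiff_le_sup.trans (sup_le hC₁ hC₂)
  have hzero : ∀ v ≠ a, (G.degIn D v : ZMod 2) = 0 := by
    intro v hva
    by_cases hv : v ∈ X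
    · rw [degIn_symmDiff_cast, congrFun heq ⟨v, Finset.mem_erase.mpr ⟨hva, hv⟩⟩]
      exact CharTwo.add_self_eq_zero _
    · have hFv : G.degIn F v = 0 := by simpa [X] using hv
      have := degIn_mono hDF v
      rw [show G.degIn D v = 0 by omega, Nat.cast_zero]
  have hza : (G.degIn D a : ZMod 2) = 0 := by
    have hsum := congrArg (Nat.cast : ℕ → ZMod 2) (sum_degIn_univ D)
    rw [Nat.cast_sum, Finset.sum_eq_single a (fun v _ hv => hzero v hv) (by simp)] at hsum
    rw [hsum, Nat.cast_mul, Nat.cast_ofNat, CharTwo.two_eq_zero (R := ZMod 2), zero_mul]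
  refine ⟨D, hDF, ?_, fun v => ZMod.natCast_eq_zero_iff_even.mp ?_⟩
  · rw [Finset.nonempty_iff_ne_empty, Ne, ← Finset.bot_eq_empty, symmDiff_eq_bot]
    exact fun h => hne (Subtype.ext h)
  · by_cases hva : v = a
    · exact hva ▸ hza
    · exact hzero v hva

lemma exists_acyclicSet_subset_degIn_cast_eq (J : Finset G.E) :
    ∃ J' ⊆ J, G.AcyclicSet J' ∧ ∀ v, (G.degIn J' v : ZMod 2) = G.degIn J v := by
  induction J using Finset.strongInduction with
  | H J ih =>
  by_cases hJ : G.AcyclicSet J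
  · exact ⟨J, subset_rfl, hJ, fun _ => rfl⟩
  simp only [AcyclicSet, not_forall, not_exists] at hJ
  obtain ⟨F, hFJ, hFne, hF⟩ := hJ
  obtain ⟨D, hDF, hDne, hD⟩ := exists_even_subset_of_degIn_ne_one hFne hF
  have hDJ := hDF.trans hFJ
  obtain ⟨J', hJ'J, hJ', hpar⟩ := ih (J \ D) (Finset.sdiff_ssubset hDJ hDne)
  refine ⟨J', hJ'J.trans Finset.sdiff_subset, hJ', fun v => ?_⟩
  rw [hpar, ← degIn_sdiff_add hDJ v, Nat.cast_add, ZMod.natCast_eq_zero_iff_even.mpr (hD v),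
    add_zero]

end Cycles

section Components

variable {R : Finset G.E}

lemma mem_support {S : Finset G.E} {v : G.V} :
    v ∈ G.support S ↔ ∃ e ∈ S, v ∈ G.ends e := by
  simp [support]

lemma support_mono {S S' : Finset G.E} (h : S ⊆ S') : G.support S ⊆ G.support S' :=
  fun _ hv => let ⟨e, he, hve⟩ := mem_support.mp hv; mem_support.mpr ⟨e, h he, hve⟩

lemma mem_compEdges {x : G.V} {e : G.E} :
    e ∈ G.compEdges R x ↔ e ∈ R ∧ ∃ u ∈ G.ends e, G.Reach R x u := by
  simp [compEdges]

lemma compEdges_subset (x : G.V) : G.compEdges R x ⊆ R := Finset.filter_subset _ _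

lemma reach_of_mem_ends {e : G.E} (he : e ∈ R) {u v : G.V} (hu : u ∈ G.ends e)
    (hv : v ∈ G.ends e) : G.Reach R u v := by
  obtain ⟨a, b, hab⟩ := exists_ends_eq e
  rw [hab, Sym2.mem_iff] at hu hv
  have hadj : G.Adj R a b := ⟨e, he, hab⟩
  rcases hu with rfl | rfl <;> rcases hv with rfl | rfl
  exacts [.refl, .single hadj, reach_symm (.single hadj), .refl]

lemma reach_of_mem_support_compEdges {x v : G.V} (hv : v ∈ G.support (G.compEdges R x)) :
    G.Reach R x v := by
  obtain ⟨e, he, hve⟩ := mem_support.mp hv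
  obtain ⟨heR, u, hue, hxu⟩ := mem_compEdges.mp he
  exact hxu.trans (reach_of_mem_ends heR hue hve)

lemma Reach.compEdges {x u : G.V} (h : G.Reach R x u) : G.Reach (G.compEdges R x) x u := by
  induction h with
  | refl => exact .refl
  | @tail b c hxb hadj ih =>
    obtain ⟨e, he, hends⟩ := hadj
    exact ih.tail ⟨e, mem_compEdges.mpr ⟨he, b, hends ▸ Sym2.mem_mk_left b c, hxb⟩, hends⟩

lemma compEdges_eq_of_reach {x y : G.V} (h : G.Reach R x y) :
    G.compEdges R x = G.compEdges R y := by
  ext e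
  simp only [mem_compEdges]
  exact and_congr_right fun _ =>
    exists_congr fun u => and_congr_right fun _ => ⟨(reach_symm h).trans, h.trans⟩

lemma degIn_compEdges {x v : G.V} (hv : v ∈ G.support (G.compEdges R x)) :
    G.degIn (G.compEdges R x) v = G.degIn R v := by
  refine Finset.sum_subset (compEdges_subset x) fun e heR he => ?_
  by_contra hne
  obtain ⟨f, hf, hvf⟩ := exists_mem_ends_of_degIn_ne_zero (F := {e}) (v := v)
    (by simpa [degIn] using hne)
  rw [Finset.mem_singleton] at hf
  exact he (mem_compEdges.mpr ⟨heR, v, hf ▸ hvf, reach_of_mem_support_compEdges hv⟩)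

lemma mem_support_compEdges_self {x : G.V} (hx : x ∈ G.support R) :
    x ∈ G.support (G.compEdges R x) := by
  obtain ⟨e, he, hxe⟩ := mem_support.mp hx
  exact mem_support.mpr ⟨e, mem_compEdges.mpr ⟨he, x, hxe, .refl⟩, hxe⟩

variable (G R) in
def components : Finset (Finset G.E) := (G.support R).image (G.compEdges R)

lemma compEdges_eq_of_mem_components {B : Finset G.E} (hB : B ∈ G.components R) {v : G.V}
    (hv : v ∈ G.support B) : G.compEdges R v = B := by
  obtain ⟨x, -, rfl⟩ := Finset.mem_image.mp hB
  exact (compEdges_eq_of_reach (reach_of_mem_support_compEdges hv)).symm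

lemma subset_of_mem_components {B : Finset G.E} (hB : B ∈ G.components R) : B ⊆ R := by
  obtain ⟨x, -, rfl⟩ := Finset.mem_image.mp hB
  exact compEdges_subset x

lemma isEulerianSub_of_mem_components (hR : ∀ v, Even (G.degIn R v)) {B : Finset G.E}
    (hB : B ∈ G.components R) : G.IsEulerianSub B := by
  obtain ⟨x, hx, rfl⟩ := Finset.mem_image.mp hB
  refine ⟨?_, fun u hu v hv => ?_, fun v hv => degIn_compEdges hv ▸ hR v⟩
  · obtain ⟨e, he, -⟩ := mem_support.mp (mem_support_compEdges_self hx)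
    exact ⟨e, he⟩
  · exact (reach_symm (reach_of_mem_support_compEdges hu).compEdges).trans
      (reach_of_mem_support_compEdges hv).compEdges

lemma pairwiseDisjoint_support_components :
    (G.components R : Set (Finset G.E)).PairwiseDisjoint G.support :=
  fun _ h₁ _ h₂ hne => Finset.disjoint_left.mpr fun _ hv₁ hv₂ =>
    hne ((compEdges_eq_of_mem_components h₁ hv₁).symm.trans
      (compEdges_eq_of_mem_components h₂ hv₂))

lemma exists_mem_components {e : G.E} (he : e ∈ R) : ∃ B ∈ G.components R, e ∈ B := by
  obtain ⟨a, b, hab⟩ := exists_ends_eq e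
  have ha : a ∈ G.ends e := hab ▸ Sym2.mem_mk_left a b
  exact ⟨G.compEdges R a, Finset.mem_image_of_mem _ (mem_support.mpr ⟨e, he, ha⟩),
    mem_compEdges.mpr ⟨he, a, ha, .refl⟩⟩

lemma sup_components : (G.components R).sup id = R :=
  le_antisymm (Finset.sup_le fun _ hB => subset_of_mem_components hB) fun _ he =>
    let ⟨B, hB, heB⟩ := exists_mem_components he
    Finset.mem_sup.mpr ⟨B, hB, heB⟩

end Components

section Classes

variable {ℬ : Finset (Finset G.E)}

lemma mem_classOf_self (ℬ : Finset (Finset G.E)) (v : G.V) : v ∈ G.classOf ℬ v := by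
  simp [classOf]

lemma classOf_eq_support (hℬ : (ℬ : Set (Finset G.E)).PairwiseDisjoint G.support)
    {B : Finset G.E} (hB : B ∈ ℬ) {v : G.V} (hv : v ∈ G.support B) :
    G.classOf ℬ v = G.support B := by
  ext u
  simp only [classOf, Finset.mem_filter, Finset.mem_univ, true_and]
  constructor
  · rintro (rfl | ⟨B', hB', hvB', huB'⟩)
    · exact hv
    · obtain rfl : B' = B := by
        by_contra hne
        exact Finset.disjoint_left.mp (hℬ hB' hB hne) hvB' hv
      exact huB'
  · exact fun hu => Or.inr ⟨B, hB, hv, hu⟩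

lemma classOf_eq_singleton {v : G.V} (hv : ∀ B ∈ ℬ, v ∉ G.support B) :
    G.classOf ℬ v = {v} := by
  ext u
  simp only [classOf, Finset.mem_filter, Finset.mem_univ, true_and, Finset.mem_singleton]
  exact ⟨fun h => h.resolve_right fun ⟨B, hB, hvB, _⟩ => hv B hB hvB, Or.inl⟩

lemma classOf_eq_classOf_iff (hℬ : (ℬ : Set (Finset G.E)).PairwiseDisjoint G.support)
    {u v : G.V} : G.classOf ℬ u = G.classOf ℬ v ↔ u ∈ G.classOf ℬ v := by
  refine ⟨fun h => h ▸ mem_classOf_self ℬ u, fun hu => ?_⟩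
  by_cases hv : ∃ B ∈ ℬ, v ∈ G.support B
  · obtain ⟨B, hB, hvB⟩ := hv
    rw [classOf_eq_support hℬ hB hvB] at hu ⊢
    exact classOf_eq_support hℬ hB hu
  · push Not at hv
    rw [classOf_eq_singleton hv, Finset.mem_singleton] at hu
    rw [hu]

end Classes

section Map

variable {W : Type} [Fintype W]

variable (G) in
/-- Contraction of the fibres of `φ`: edges inside a fibre become loops. -/
abbrev map (φ : G.V → W) : SignedMultigraph where
  V := W
  E := G.E
  ends e := (G.ends e).map φ
  neg := G.neg

lemma map_ends {φ : G.V → W} {e : G.E} {a b : G.V} (h : G.ends e = s(a, b)) :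
    (G.map φ).ends e = s(φ a, φ b) := by
  change (G.ends e).map φ = _
  rw [h, Sym2.map_mk]

lemma degIn_map (φ : G.V → W) (F : Finset G.E) (w : W) :
    (G.map φ).degIn F w = ∑ v with φ v = w, G.degIn F v := by
  rw [degIn_eq_sum_degIn_singleton (G := G.map φ), sum_degIn]
  refine Finset.sum_congr rfl fun (e : G.E) _ => ?_
  obtain ⟨a, b, hab⟩ := exists_ends_eq (G := G) e
  have := sum_degIn_singleton (map_ends (φ := φ) hab) {w}
  rw [Finset.sum_singleton] at this
  rw [this, sum_degIn_singleton hab]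
  simp

lemma boundary_map [DecidableEq W] (φ : G.V → W) (F : Finset G.E) (X : Finset W) :
    (G.map φ).boundary F X = G.boundary F {v | φ v ∈ X} := by
  ext (e : G.E)
  obtain ⟨a, b, hab⟩ := exists_ends_eq (G := G) e
  simp [boundary, crossesB_eq hab, crossesB_eq (map_ends (φ := φ) hab)]

end Map

section Boundary

lemma mem_boundary {F : Finset G.E} {U : Finset G.V} {e : G.E} :
    e ∈ G.boundary F U ↔ e ∈ F ∧ G.crossesB U e = true :=
  Finset.mem_filter

lemma boundary_union (A B : Finset G.E) (U : Finset G.V) :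
    G.boundary (A ∪ B) U = G.boundary A U ∪ G.boundary B U :=
  Finset.filter_union _ _ _

lemma boundary_compl (F : Finset G.E) (U : Finset G.V) :
    G.boundary F (Finset.univ \ U) = G.boundary F U := by
  ext e
  obtain ⟨a, b, hab⟩ := exists_ends_eq e
  simp [mem_boundary, crossesB_eq hab]

lemma card_boundary_cast_eq_of_degIn_cast_eq {A B : Finset G.E}
    (h : ∀ v, (G.degIn A v : ZMod 2) = G.degIn B v) (U : Finset G.V) :
    ((G.boundary A U).card : ZMod 2) = (G.boundary B U).card := by
  simp only [card_boundary_cast, h]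

end Boundary

section Contraction

variable {R : Finset G.E}

variable (G) in
def IsClassUnion (ℬ : Finset (Finset G.E)) (X : Finset G.V) : Prop :=
  ∀ v ∈ X, G.classOf ℬ v ⊆ X

lemma filter_classOf_mem_image {ℬ : Finset (Finset G.E)}
    (hℬ : (ℬ : Set (Finset G.E)).PairwiseDisjoint G.support) {X : Finset G.V}
    (hX : G.IsClassUnion ℬ X) :
    ({v | G.classOf ℬ v ∈ X.image (G.classOf ℬ)} : Finset G.V) = X := by
  ext u
  simp only [Finset.mem_filter, Finset.mem_univ, true_and, Finset.mem_image]
  exact ⟨fun ⟨v, hv, huv⟩ => hX v hv ((classOf_eq_classOf_iff hℬ).mp huv.symm),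
    fun hu => ⟨u, hu, rfl⟩⟩

lemma mem_of_mem_ends_of_isClassUnion {X : Finset G.V}
    (hX : G.IsClassUnion (G.components R) X) {e : G.E} (he : e ∈ R) {u v : G.V}
    (hu : u ∈ G.ends e) (hv : v ∈ G.ends e) (huX : u ∈ X) : v ∈ X := by
  have heB : e ∈ G.compEdges R u := mem_compEdges.mpr ⟨he, u, hu, .refl⟩
  have hB : G.compEdges R u ∈ G.components R :=
    Finset.mem_image_of_mem _ (mem_support.mpr ⟨e, he, hu⟩)
  refine hX u huX ?_
  rw [classOf_eq_support pairwiseDisjoint_support_components hB (mem_support.mpr ⟨e, heB, hu⟩)]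
  exact mem_support.mpr ⟨e, heB, hv⟩

lemma boundary_eq_empty_of_isClassUnion {X : Finset G.V}
    (hX : G.IsClassUnion (G.components R) X) : G.boundary R X = ∅ := by
  refine Finset.eq_empty_of_forall_notMem fun e he => ?_
  obtain ⟨heR, hcross⟩ := mem_boundary.mp he
  obtain ⟨a, b, hab⟩ := exists_ends_eq e
  have ha : a ∈ G.ends e := hab ▸ Sym2.mem_mk_left a b
  have hb : b ∈ G.ends e := hab ▸ Sym2.mem_mk_right a b
  rw [crossesB_eq hab] at hcross
  by_cases haX : a ∈ X
  · simp [haX, mem_of_mem_ends_of_isClassUnion hX heR ha hb haX] at hcross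
  · by_cases hbX : b ∈ X
    · exact haX (mem_of_mem_ends_of_isClassUnion hX heR hb ha hbX)
    · simp [haX, hbX] at hcross

lemma classDeg_eq_degIn_map {ℬ : Finset (Finset G.E)}
    (hℬ : (ℬ : Set (Finset G.E)).PairwiseDisjoint G.support) (F : Finset G.E) (v : G.V) :
    G.classDeg ℬ F v = (G.map (G.classOf ℬ)).degIn F (G.classOf ℬ v) := by
  rw [degIn_map, classDeg]
  congr 1
  ext u
  simp [classOf_eq_classOf_iff hℬ]

lemma isClassUnion_components_of_forall_not_crossesB {U : Finset G.V}
    (hR : ∀ e ∈ R, G.crossesB U e = false) : G.IsClassUnion (G.components R) U := by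
  intro v hv u hu
  by_cases hvR : v ∈ G.support R
  · have hB : G.compEdges R v ∈ G.components R := Finset.mem_image_of_mem _ hvR
    rw [classOf_eq_support pairwiseDisjoint_support_components hB
      (mem_support_compEdges_self hvR)] at hu
    exact ((reach_of_mem_support_compEdges hu).mem_iff_of_forall_not_crossesB hR).mp hv
  · have hvB : ∀ B ∈ G.components R, v ∉ G.support B :=
      fun B hB hvB => hvR (support_mono (subset_of_mem_components hB) hvB)
    rw [classOf_eq_singleton hvB, Finset.mem_singleton] at hu
    exact hu ▸ hv

variable (G) in
/-- Condition (2) of a generalized barbell, imposed on every union of contracted vertices. -/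
def BoundaryParity (R S : Finset G.E) : Prop :=
  ∀ X, G.IsClassUnion (G.components R) X →
    ((G.boundary S X).card : ZMod 2) =
      ((G.negEdges Finset.univ).filter fun e => ∃ v ∈ X, v ∈ G.ends e).card

/-- Orienting each negative edge gives a vertex weight whose sum over a union of classes counts
the negative edges inside it. -/
lemma exists_acyclicSet_boundaryParity_union (hconn : ∀ u v, G.Reach Finset.univ u v)
    (hNR : G.negEdges Finset.univ ⊆ R) (heven : Even (G.negEdges Finset.univ).card) :
    ∃ C : Finset G.E, (G.map (G.classOf (G.components R))).AcyclicSet C ∧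
      G.BoundaryParity R (R ∪ C) := by
  set ℬ := G.components R
  set N := G.negEdges Finset.univ
  let τ : G.V → ZMod 2 := fun v => (N.filter fun e => (G.ends e).out.1 = v).card
  have hτ : ∑ v, τ v = 0 := by
    have := Finset.sum_card_fiberwise_eq_card_filter N Finset.univ fun e => (G.ends e).out.1
    rw [Finset.filter_true_of_mem fun _ _ => Finset.mem_univ _] at this
    simp only [τ, ← Nat.cast_sum]
    convert ZMod.natCast_eq_zero_iff_even.mpr heven
  obtain ⟨J, -, hJ⟩ := exists_subset_degIn_cast_eq hconn τ hτ
  obtain ⟨C, -, hC, hCJ⟩ := (G.map (G.classOf ℬ)).exists_acyclicSet_subset_degIn_cast_eq J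
  refine ⟨C, hC, fun X hX => ?_⟩
  have hpre : ({v | G.classOf ℬ v ∈ X.image (G.classOf ℬ)} : Finset G.V) = X :=
    filter_classOf_mem_image pairwiseDisjoint_support_components hX
  calc ((G.boundary (R ∪ C) X).card : ZMod 2)
      = (G.boundary C X).card := by
        rw [boundary_union, boundary_eq_empty_of_isClassUnion hX, Finset.empty_union]
    _ = ((G.map (G.classOf ℬ)).boundary C (X.image (G.classOf ℬ))).card := by
        rw [boundary_map, hpre]
    _ = ((G.map (G.classOf ℬ)).boundary J (X.image (G.classOf ℬ))).card :=
        card_boundary_cast_eq_of_degIn_cast_eq hCJ _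
    _ = (G.boundary J X).card := by rw [boundary_map, hpre]
    _ = ∑ v ∈ X, τ v := by simp only [card_boundary_cast, hJ]
    _ = (N.filter fun e => (G.ends e).out.1 ∈ X).card := by
        simp only [τ, ← Nat.cast_sum]
        congr 1
        convert Finset.sum_card_fiberwise_eq_card_filter N X fun e => (G.ends e).out.1
    _ = _ := by
        congr 2
        refine Finset.filter_congr fun e he => ⟨fun h => ⟨_, h, Sym2.out_fst_mem _⟩, ?_⟩
        rintro ⟨v, hvX, hve⟩
        exact mem_of_mem_ends_of_isClassUnion hX (hNR he) hve (Sym2.out_fst_mem _) hvX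

end Contraction

section GenBarbell

lemma genBarbellWitness_components {R C : Finset G.E} (hNR : G.negEdges Finset.univ ⊆ R)
    (hR : ∀ v, Even (G.degIn R v)) (hC : (G.map (G.classOf (G.components R))).AcyclicSet C)
    (hpar : G.BoundaryParity R (R ∪ C)) :
    G.GenBarbellWitness (R ∪ C) (G.components R) := by
  have hℬ := pairwiseDisjoint_support_components (G := G) (R := R)
  refine ⟨fun B hB => ⟨(subset_of_mem_components hB).trans Finset.subset_union_left,
    isEulerianSub_of_mem_components hR hB⟩, fun B₁ h₁ B₂ h₂ hne => hℬ h₁ h₂ hne,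
    ?_, ?_, ?_⟩
  · intro F hF hFne
    rw [sup_components, Finset.union_sdiff_left] at hF
    obtain ⟨w, hw⟩ := hC F (hF.trans Finset.sdiff_subset) hFne
    obtain ⟨e, -, hwe⟩ := exists_mem_ends_of_degIn_ne_zero (G := G.map _) (F := F) (v := w)
      (by omega)
    obtain ⟨v, -, rfl⟩ := Sym2.mem_map.mp hwe
    exact ⟨v, (classDeg_eq_degIn_map hℬ F v).trans hw⟩
  · intro B hB
    have hX : G.IsClassUnion (G.components R) (G.support B) :=
      fun u hu => (classOf_eq_support hℬ hB hu).le
    rw [← ZMod.natCast_eq_natCast_iff, hpar _ hX]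
    congr 2
    ext e
    simp only [negEdges, Finset.mem_filter, Finset.mem_univ, true_and]
    constructor
    · rintro ⟨heB, hneg⟩
      exact ⟨hneg, _, mem_support.mpr ⟨e, heB, Sym2.out_fst_mem _⟩, Sym2.out_fst_mem _⟩
    · rintro ⟨hneg, u, hu, hue⟩
      have heR : e ∈ R := hNR (by simpa [negEdges] using hneg)
      exact ⟨compEdges_eq_of_mem_components hB hu ▸ mem_compEdges.mpr ⟨heR, u, hue, .refl⟩,
        hneg⟩
  · intro v _ hvB
    have hX : G.IsClassUnion (G.components R) {v} := by
      intro u hu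
      rw [Finset.mem_singleton.mp hu, classOf_eq_singleton hvB]
    have hempty : ((G.negEdges Finset.univ).filter fun e => ∃ u ∈ ({v} : Finset G.V),
        u ∈ G.ends e) = ∅ := by
      refine Finset.filter_false_of_mem fun e he ⟨u, hu, hue⟩ => ?_
      rw [Finset.mem_singleton.mp hu] at hue
      have hvR : v ∈ G.support R := mem_support.mpr ⟨e, hNR he, hue⟩
      exact hvB _ (Finset.mem_image_of_mem _ hvR) (mem_support_compEdges_self hvR)
    rw [← ZMod.natCast_eq_zero_iff_even, hpar _ hX, hempty, Finset.card_empty, Nat.cast_zero]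

lemma reach_erase_iff_mem_of_crossesB_iff (hconn : ∀ u v, G.Reach Finset.univ u v)
    {U : Finset G.V} {b : G.E} (hcross : ∀ e, G.crossesB U e = true ↔ e = b) {x : G.V}
    (hxb : x ∈ G.ends b) (hxU : x ∈ U) (v : G.V) :
    G.Reach (Finset.univ.erase b) x v ↔ v ∈ U := by
  obtain ⟨y, hxy⟩ := Sym2.mem_iff_exists.mp hxb
  have hyU : y ∉ U := by
    have := (hcross b).mpr rfl
    rw [crossesB_eq hxy] at this
    simpa [hxU] using this
  have hnot : ∀ e ∈ Finset.univ.erase b, G.crossesB U e = false := fun e he =>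
    Bool.eq_false_iff.mpr fun h => Finset.ne_of_mem_erase he ((hcross e).mp h)
  exact ⟨fun h => (h.mem_iff_of_forall_not_crossesB hnot).mp hxU, fun hv =>
    ((hconn x v).erase_or hxy).resolve_right
      fun h => hyU ((h.mem_iff_of_forall_not_crossesB hnot).mpr hv)⟩

lemma mem_of_isBgBridge {R S : Finset G.E} (hconn : ∀ u v, G.Reach Finset.univ u v)
    (hNR : G.negEdges Finset.univ ⊆ R) (hRS : R ⊆ S)
    (hpar : G.BoundaryParity R S)
    {b : G.E} (hb : G.IsBgBridge b) : b ∈ S := by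
  obtain ⟨⟨U₀, hU₀⟩, x, hxb, hodd⟩ := hb
  by_cases hbR : b ∈ R
  · exact hRS hbR
  obtain ⟨U, hU, hxU⟩ : ∃ U, G.boundary Finset.univ U = {b} ∧ x ∈ U := by
    by_cases hx : x ∈ U₀
    · exact ⟨U₀, hU₀, hx⟩
    · exact ⟨Finset.univ \ U₀, (boundary_compl _ _).trans hU₀, by simp [hx]⟩
  have hcross : ∀ e, G.crossesB U e = true ↔ e = b := fun e => by
    simpa [mem_boundary] using congrArg (e ∈ ·) hU
  have hnot : ∀ e ∈ Finset.univ.erase b, G.crossesB U e = false := fun e he =>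
    Bool.eq_false_iff.mpr fun h => Finset.ne_of_mem_erase he ((hcross e).mp h)
  have hside := reach_erase_iff_mem_of_crossesB_iff hconn hcross hxb hxU
  have hclosed : G.IsClassUnion (G.components R) U :=
    isClassUnion_components_of_forall_not_crossesB fun e he =>
      hnot e (Finset.mem_erase.mpr ⟨fun h => hbR (h ▸ he), Finset.mem_univ e⟩)
  have hcount : ((G.negEdges Finset.univ).filter fun e => ∃ v ∈ U, v ∈ G.ends e) =
      G.negEdges (G.compEdges (Finset.univ.erase b) x) := by
    ext e
    simp only [negEdges, Finset.mem_filter, mem_compEdges, Finset.mem_univ, true_and, and_true,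
      Finset.mem_erase, hside]
    constructor
    · rintro ⟨hneg, v, hvU, hve⟩
      have heR : e ∈ R := hNR (by simpa [negEdges] using hneg)
      exact ⟨⟨fun h : e = b => hbR (h ▸ heR), v, hve, hvU⟩, hneg⟩
    · rintro ⟨⟨-, v, hve, hvU⟩, hneg⟩
      exact ⟨hneg, v, hvU, hve⟩
  have hparU := hpar U hclosed
  rw [hcount] at hparU
  by_contra hbS
  have hempty : G.boundary S U = ∅ :=
    Finset.eq_empty_of_forall_notMem fun e he => by
      obtain ⟨heS, hc⟩ := mem_boundary.mp he
      exact hbS ((hcross e).mp hc ▸ heS)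
  rw [hempty, Finset.card_empty, Nat.cast_zero, eq_comm, ZMod.natCast_eq_zero_iff_even] at hparU
  exact hodd hparU

lemma sSet_subset_of_even {R : Finset G.E} (hR : ∀ v, Even (G.degIn R v)) {e : G.E}
    (he : e ∈ R) : G.SSet e ⊆ R := by
  intro f hf
  rcases Finset.mem_insert.mp hf with rfl | hf
  · exact he
  obtain ⟨-, U, hU⟩ := (Finset.mem_filter.mp hf).2
  by_contra hfR
  have hcut : G.boundary R U = {e} := by
    ext g
    have := congrArg (g ∈ ·) hU
    simp only [mem_boundary, Finset.mem_univ, true_and, Finset.mem_insert,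
      Finset.mem_singleton, eq_iff_iff] at this
    rw [mem_boundary, this, Finset.mem_singleton]
    exact ⟨fun ⟨hg, h⟩ => h.resolve_right fun h => hfR (h ▸ hg),
      fun h => ⟨h ▸ he, Or.inl h⟩⟩
  have hodd := card_boundary_cast R U
  simp only [hcut, Finset.card_singleton, Nat.cast_one,
    fun v => ZMod.natCast_eq_zero_iff_even.mpr (hR v), Finset.sum_const_zero] at hodd
  exact one_ne_zero hodd

end GenBarbell

end SignedMultigraph

open SignedMultigraph in
theorem genBarbell_subgraph_exists_general (G : SignedMultigraph)
    (htree : G.IsSpanningTree (Finset.univ \ G.negEdges Finset.univ))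
    (heven : Even (G.negEdges Finset.univ).card) :
    ∃ S : Finset G.E, G.IsGenBarbell S ∧
      (∀ b : G.E, G.IsBgBridge b → b ∈ S) ∧
      ∀ e ∈ G.negEdges Finset.univ, G.SSet e ⊆ S := by
  set N := G.negEdges Finset.univ
  obtain ⟨-, -, hT⟩ := htree
  have hconn : ∀ u v, G.Reach Finset.univ u v := fun u v =>
    reach_mono (Finset.subset_univ _) (hT u v)
  have hN : ∑ v, (G.degIn N v : ZMod 2) = 0 := by
    rw [← Nat.cast_sum, sum_degIn_univ, Nat.cast_mul, Nat.cast_ofNat,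
      CharTwo.two_eq_zero (R := ZMod 2), zero_mul]
  obtain ⟨D, hDT, hD⟩ := exists_subset_degIn_cast_eq hT _ hN
  have hDN : Disjoint D N := Finset.disjoint_of_subset_left hDT Finset.sdiff_disjoint
  set R := N ∪ D
  have hR : ∀ v, Even (G.degIn R v) := fun v => by
    rw [← ZMod.natCast_eq_zero_iff_even, degIn_union hDN.symm, Nat.cast_add, hD]
    exact CharTwo.add_self_eq_zero _
  obtain ⟨C, hC, hpar⟩ :=
    exists_acyclicSet_boundaryParity_union hconn Finset.subset_union_left heven
  exact ⟨R ∪ C, ⟨_, genBarbellWitness_components Finset.subset_union_left hR hC hpar⟩,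
    fun b hb => mem_of_isBgBridge hconn Finset.subset_union_left Finset.subset_union_left hpar hb,
    fun e he => (sSet_subset_of_even hR (Finset.subset_union_left he)).trans
      Finset.subset_union_left⟩

/-- Let `H` be a signed graph with `|E_N(H)| ≥ 2` such that
`H − E_N(H)` is a spanning tree of `H`. If `|E_N(H)|` is even, then `H` has a
subgraph which is a generalized barbell containing all edges of
`B_g(H) ∪ (⋃_{e ∈ E_N(H)} S_H(e))`. -/
theorem genBarbell_subgraph_exists (G : SignedMultigraph)
    (hn : 2 ≤ (G.negEdges Finset.univ).card)
    (htree : G.IsSpanningTree (Finset.univ \ G.negEdges Finset.univ))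
    (heven : Even (G.negEdges Finset.univ).card) :
    ∃ S : Finset G.E, G.IsGenBarbell S ∧
      (∀ b : G.E, G.IsBgBridge b → b ∈ S) ∧
      ∀ e ∈ G.negEdges Finset.univ, G.SSet e ⊆ S :=
  genBarbell_subgraph_exists_general G htree heven
end
end

section
/- Let k ∈ {2, 3} and let G be a signed graph with no positive loops and at least one edge. If G has a signed circuit {1, …, k}-cover, then G has a signed circuit cover whose length is at most k·|E(G)| − 2(k − 1); in particular SCC(G) ≤ k·|E(G)| − 2(k − 1). -/
open scoped Classical

noncomputable section

namespace SignedMultigraph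

variable (G : SignedMultigraph)

lemma coverCount_cons (S : Finset G.E) (F : Multiset (Finset G.E)) (e : G.E) :
    G.coverCount (S ::ₘ F) e = (if e ∈ S then 1 else 0) + G.coverCount F e := by
  simp only [coverCount, Multiset.filter_cons]
  split <;> simp [Nat.add_comm]

lemma coverLength_cons (S : Finset G.E) (F : Multiset (Finset G.E)) :
    G.coverLength (S ::ₘ F) = S.card + G.coverLength F := by
  simp [coverLength]

lemma coverLength_eq_sum (F : Multiset (Finset G.E)) :
    G.coverLength F = ∑ e : G.E, G.coverCount F e := by
  induction F using Multiset.induction_on with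
  | empty => simp [coverLength, coverCount]
  | cons S F ih =>
    simp only [coverLength_cons, coverCount_cons, Finset.sum_add_distrib, ← ih]
    congr 1
    simp

lemma two_le_card_of_signedCircuit
    (hloops : ∀ e : G.E, (G.ends e).IsDiag → G.neg e = true)
    {S : Finset G.E} (hS : G.IsSignedCircuit S) : 2 ≤ S.card := by
  rcases hS with ⟨⟨hne, _hconn, hdeg⟩, heven⟩ | ⟨C₁, C₂, h1, h2, hdisj, _, rfl⟩ |
      ⟨C₁, C₂, P, u, v, h1, _, _, hP, _, _, hPC₁, _, rfl⟩
  · by_contra h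
    have hcard : S.card = 1 := le_antisymm (by omega) (Finset.one_le_card.mpr hne)
    obtain ⟨e, rfl⟩ := Finset.card_eq_one.mp hcard
    by_cases hd : (G.ends e).IsDiag
    · have hne' : G.negEdges {e} = {e} := by
        simp [negEdges, Finset.filter_singleton, hloops e hd]
      rw [hne'] at heven
      simp at heven
    · obtain ⟨a, b, hx⟩ : ∃ a b, G.ends e = s(a, b) :=
        Sym2.inductionOn (f := fun x => ∃ a b, x = s(a, b)) (G.ends e)
          fun a b => ⟨a, b, rfl⟩
      have hab : a ≠ b := by
        intro h'; exact hd (by rw [hx, h']; exact Sym2.mk_isDiag_iff.mpr rfl)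
      have ha : a ∈ G.support {e} := by
        simp only [support, Finset.mem_filter, Finset.mem_univ, true_and]
        exact ⟨e, Finset.mem_singleton_self e, by rw [hx]; simp⟩
      have hdeg' := hdeg a ha
      rw [degIn, Finset.sum_singleton, hx] at hdeg'
      have hnd : ¬ (s(a, b) = Sym2.diag a) := by
        simp only [Sym2.diag, Sym2.eq_iff]
        tauto
      rw [if_neg hnd, if_pos (by simp)] at hdeg'
      omega
  · rw [Finset.card_union_of_disjoint hdisj]
    have := Finset.one_le_card.mpr h1.1.1
    have := Finset.one_le_card.mpr h2.1.1
    omega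
  · calc 2 ≤ (C₁ ∪ P).card := by
          rw [Finset.card_union_of_disjoint hPC₁.symm]
          have := Finset.one_le_card.mpr h1.1.1
          have := Finset.one_le_card.mpr hP.1
          omega
      _ ≤ (C₁ ∪ C₂ ∪ P).card := Finset.card_le_card (by
          intro x hx
          rcases Finset.mem_union.mp hx with h | h
          · exact Finset.mem_union_left _ (Finset.mem_union_left _ h)
          · exact Finset.mem_union_right _ h)

lemma exists_good_cover (k : ℕ) (hk2 : 2 ≤ k)
    (hloops : ∀ e : G.E, (G.ends e).IsDiag → G.neg e = true)
    (hE : Nonempty G.E) :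
    ∀ (n : ℕ) (F : Multiset (Finset G.E)), Multiset.card F = n →
      (∀ S ∈ F, G.IsSignedCircuit S) →
      (∀ e : G.E, 1 ≤ G.coverCount F e ∧ G.coverCount F e ≤ k) →
      ∃ F' : Multiset (Finset G.E), G.IsSignedCircuitCover F' ∧
        (G.coverLength F' : ℤ) ≤
          (k : ℤ) * (Fintype.card G.E : ℤ) - 2 * ((k : ℤ) - 1) := by
  intro n
  induction n using Nat.strong_induction_on with
  | _ n ih =>
    intro F hn hmem hcnt
    by_cases hA : ∃ S ∈ F, ∀ e ∈ S, 2 ≤ G.coverCount F e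
    · obtain ⟨S, hSF, hS2⟩ := hA
      have hFS : S ::ₘ F.erase S = F := Multiset.cons_erase hSF
      refine ih (Multiset.card (F.erase S)) ?_ (F.erase S) rfl
        (fun S' h => hmem S' (Multiset.mem_of_mem_erase h)) ?_
      · rw [← hn]; exact Multiset.card_erase_lt_of_mem hSF
      · intro e
        have h1 := (hcnt e).1
        have h2 := (hcnt e).2
        have hc : G.coverCount F e
            = (if e ∈ S then 1 else 0) + G.coverCount (F.erase S) e := by
          rw [← hFS, coverCount_cons]
          rw [hFS]
        by_cases he : e ∈ S
        · have := hS2 e he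
          rw [hc, if_pos he] at this h2
          omega
        · rw [hc, if_neg he] at h1 h2
          omega
    · push_neg at hA
      refine ⟨F, ⟨hmem, fun e => (hcnt e).1⟩, ?_⟩
      obtain ⟨e⟩ := hE
      have hF0 : F ≠ 0 := by
        intro h
        have := (hcnt e).1
        rw [h] at this
        simp [coverCount] at this
      obtain ⟨S₀, hS₀⟩ := Multiset.exists_mem_of_ne_zero hF0
      have hFS : S₀ ::ₘ F.erase S₀ = F := Multiset.cons_erase hS₀
      have hE2 : 2 ≤ Fintype.card G.E := by
        calc 2 ≤ S₀.card := G.two_le_card_of_signedCircuit hloops (hmem S₀ hS₀)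
          _ ≤ Fintype.card G.E := by
              rw [← Finset.card_univ]; exact Finset.card_le_card (Finset.subset_univ _)
      by_cases hF1 : F.erase S₀ = 0
      · -- F = {S₀}
        have hF : F = {S₀} := by rw [← hFS, hF1]; rfl
        have huniv : S₀ = Finset.univ := by
          apply Finset.eq_univ_of_forall
          intro f
          have := (hcnt f).1
          rw [hF] at this
          simp only [coverCount] at this
          by_contra hfS
          rw [Multiset.filter_singleton, if_neg hfS] at this
          simp at this
        have hlen : G.coverLength F = Fintype.card G.E := by
          rw [hF]
          simp [coverLength, huniv, Finset.card_univ]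
        rw [hlen]
        have hkZ : (2 : ℤ) ≤ (k : ℤ) := by exact_mod_cast hk2
        have hEZ : (2 : ℤ) ≤ (Fintype.card G.E : ℤ) := by exact_mod_cast hE2
        nlinarith [mul_nonneg (sub_nonneg.mpr hkZ) (sub_nonneg.mpr hEZ)]
      · obtain ⟨S₁, hS₁⟩ := Multiset.exists_mem_of_ne_zero hF1
        obtain ⟨e₀, he₀S, he₀c⟩ := hA S₀ hS₀
        obtain ⟨e₁, he₁S, he₁c⟩ := hA S₁ (Multiset.mem_of_mem_erase hS₁)
        have hc₀ : G.coverCount F e₀ = 1 := le_antisymm (by omega) (hcnt e₀).1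
        have hc₁ : G.coverCount F e₁ = 1 := le_antisymm (by omega) (hcnt e₁).1
        have hne : e₀ ≠ e₁ := by
          intro h
          subst h
          have h1 : 1 ≤ G.coverCount (F.erase S₀) e₀ := by
            have hm : S₁ ∈ Multiset.filter (fun S => e₀ ∈ S) (F.erase S₀) :=
              Multiset.mem_filter.mpr ⟨hS₁, he₁S⟩
            exact Multiset.card_pos.mpr (by intro hz; rw [hz] at hm; simp at hm)
          have hc : G.coverCount F e₀
              = (if e₀ ∈ S₀ then 1 else 0) + G.coverCount (F.erase S₀) e₀ := by
            rw [← hFS, coverCount_cons, hFS]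
          rw [if_pos he₀S] at hc
          omega
        -- sum bound
        set s : Finset G.E := {e₀, e₁} with hs
        have hscard : s.card = 2 := Finset.card_pair hne
        have hsum : (G.coverLength F : ℤ) = ∑ f : G.E, (G.coverCount F f : ℤ) := by
          rw [coverLength_eq_sum]
          push_cast
          rfl
        have hsplit : ∑ f : G.E, (G.coverCount F f : ℤ)
            = ∑ f ∈ Finset.univ \ s, (G.coverCount F f : ℤ)
              + ∑ f ∈ s, (G.coverCount F f : ℤ) :=
          (Finset.sum_sdiff (Finset.subset_univ s)).symm
        have hpair : ∑ f ∈ s, (G.coverCount F f : ℤ) = 2 := by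
          rw [hs, Finset.sum_pair hne, hc₀, hc₁]
          norm_num
        have hrest : ∑ f ∈ Finset.univ \ s, (G.coverCount F f : ℤ)
            ≤ ((Fintype.card G.E : ℤ) - 2) * k := by
          calc ∑ f ∈ Finset.univ \ s, (G.coverCount F f : ℤ)
              ≤ ∑ _f ∈ Finset.univ \ s, (k : ℤ) :=
                Finset.sum_le_sum fun f _ => by exact_mod_cast (hcnt f).2
            _ = ((Finset.univ \ s).card : ℤ) * k := by
                rw [Finset.sum_const, nsmul_eq_mul]
            _ = ((Fintype.card G.E : ℤ) - 2) * k := by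
                rw [Finset.card_sdiff_of_subset (Finset.subset_univ s), hscard, Finset.card_univ]
                rw [Nat.cast_sub hE2]
                norm_num
        rw [hsum, hsplit, hpair]
        nlinarith [hrest]

end SignedMultigraph

/-- Let `k ∈ {2, 3}` and let `G` be a signed graph with no
positive loops and at least one edge. If `G` has a signed circuit
`{1, …, k}`-cover, then `G` has a signed circuit cover whose length is at most
`k·|E(G)| − 2(k − 1)`; in particular `SCC(G) ≤ k·|E(G)| − 2(k − 1)`. -/
theorem cover_from_kCover (G : SignedMultigraph) (k : ℕ) (hk : k = 2 ∨ k = 3)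
    (hE : Nonempty G.E)
    (hloops : ∀ e : G.E, (G.ends e).IsDiag → G.neg e = true)
    (hcov : ∃ F : Multiset (Finset G.E),
      (∀ S ∈ F, G.IsSignedCircuit S) ∧
      ∀ e : G.E, 1 ≤ G.coverCount F e ∧ G.coverCount F e ≤ k) :
    (∃ F' : Multiset (Finset G.E), G.IsSignedCircuitCover F' ∧
        (G.coverLength F' : ℤ) ≤
          (k : ℤ) * (Fintype.card G.E : ℤ) - 2 * ((k : ℤ) - 1)) ∧
    (G.SCC : ℤ) ≤ (k : ℤ) * (Fintype.card G.E : ℤ) - 2 * ((k : ℤ) - 1) := by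
  obtain ⟨F, hmemF, hcntF⟩ := hcov
  have hk2 : 2 ≤ k := by rcases hk with rfl | rfl <;> norm_num
  obtain ⟨F', hF', hlen⟩ :=
    G.exists_good_cover k hk2 hloops hE (Multiset.card F) F rfl hmemF hcntF
  refine ⟨⟨F', hF', hlen⟩, ?_⟩
  have hSCC : G.SCC ≤ G.coverLength F' := Nat.sInf_le ⟨F', hF', rfl⟩
  calc (G.SCC : ℤ) ≤ (G.coverLength F' : ℤ) := by exact_mod_cast hSCC
    _ ≤ _ := hlen
end
end
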